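/- Fix an integer $i \ge 1$ and set $\varpi_1 = (p,1) \in E^\times$. Then every $x \in E^\times$ belongs to the double coset $\mathbb{Q}_p^\times\, \varpi_1^{\,m}\, (1 + b\theta)\, \mathcal{O}_{E,i}^\times$ for exactly one pair consisting of an integer $m \in \mathbb{Z}$ and a class $\bar{b} \in \mathbb{Z}_p/p^i\mathbb{Z}_p$ whose representatives $b$ satisfy $1+b \in \mathbb{Z}_p^\times$ (the double coset of $1+b\theta$ depending only on $\bar b$). -/

import Mathlib

/-! The map `x ↦ x₁ / x₂` identifies `E^× / ℚ_p^×` with `ℚ_p^×` and carries `𝒪_{E,i}^×` onto the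
principal units `1 + p^i ℤ_p`, so the double cosets are the cosets of `1 + p^i ℤ_p` in `ℚ_p^×`.
Every `q ∈ ℚ_p^×` is `p^m u` with `u ∈ ℤ_p^×`, where `m` is read off the norm; hence these cosets
are classified by `m` and `u mod p^i`, and `ϖ₁^m (1 + bθ)` has ratio `p^m (1 + b)`. -/

open scoped Classical

namespace ArakawaSplit

variable (p : ℕ) [Fact p.Prime]

/-- The split quadratic étale algebra `E = ℚ_p × ℚ_p`, with `ℚ_p` embedded diagonally. -/
abbrev E := ℚ_[p] × ℚ_[p]

/-- `θ = (1,0) ∈ E`. -/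
noncomputable def θ : E p := (1, 0)

/-- The inclusion `ℤ_p → E` (diagonal). -/
noncomputable def ι : ℤ_[p] →+* E p := algebraMap ℤ_[p] (E p)

/-- Membership in `𝒪_E = ℤ_p × ℤ_p ⊆ E`. -/
def MemOE (z : E p) : Prop := (∃ x : ℤ_[p], z.1 = x) ∧ (∃ y : ℤ_[p], z.2 = y)

/-- Membership in `𝒪_{E,i} = ℤ_p + p^i 𝒪_E ⊆ E`. -/
def MemOEi (i : ℕ) (z : E p) : Prop :=
  ∃ a w₁ w₂ : ℤ_[p],
    z = ((a : ℚ_[p]) + (p : ℚ_[p]) ^ i * w₁, (a : ℚ_[p]) + (p : ℚ_[p]) ^ i * w₂)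

/-- Membership of a unit `u ∈ Eˣ` in `𝒪_{E,i}^× = 𝒪_{E,i} ∩ 𝒪_E^×`. -/
def MemOEiUnits (i : ℕ) (u : (E p)ˣ) : Prop :=
  MemOEi p i ↑u ∧ MemOE p ↑u ∧ MemOE p ↑u⁻¹

/-- `χ : E^× → ℂ^×` is trivial on the diagonally embedded `ℚ_p^×`. -/
def TrivialOnQp (χ : (E p)ˣ →* ℂˣ) : Prop :=
  ∀ t : ℚ_[p]ˣ, χ (Units.map (algebraMap ℚ_[p] (E p)).toMonoidHom t) = 1

/-- `χ` has conductor exponent `n`: it is trivial on `𝒪_{E,n}^×` and, when `n > 0`,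
nontrivial on `𝒪_{E,n-1}^×`. -/
def CondExp (χ : (E p)ˣ →* ℂˣ) (n : ℕ) : Prop :=
  (∀ u : (E p)ˣ, MemOEiUnits p n u → χ u = 1) ∧
  (0 < n → ∃ u : (E p)ˣ, MemOEiUnits p (n - 1) u ∧ χ u ≠ 1)

/-- The value of `χ` at an element of `E`, with junk value `0` at non-units. -/
noncomputable def chiV (χ : (E p)ˣ →* ℂˣ) (z : E p) : ℂ :=
  if h : IsUnit z then (χ h.unit : ℂ) else 0

end ArakawaSplit

namespace ArakawaSplit

variable (p : ℕ) [Fact p.Prime]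

/-- `ϖ₁ = (p, 1) ∈ E^×`. -/
noncomputable def varpi1 : (E p)ˣ :=
  MulEquiv.prodUnits.symm
    (Units.mk0 (p : ℚ_[p])
      (Nat.cast_ne_zero.mpr (Fact.out : p.Prime).ne_zero), 1)

/-- The unit of `E` determined by a unit element `z ∈ E` (junk value `1` otherwise). -/
noncomputable def unitOf (z : E p) : (E p)ˣ :=
  if h : IsUnit z then h.unit else 1

/-- `x` lies in the double coset `ℚ_p^× y 𝒪_{E,i}^×` inside `E^×`. -/
def InCoset (i : ℕ) (y x : (E p)ˣ) : Prop :=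
  ∃ t : ℚ_[p]ˣ, ∃ u : (E p)ˣ, MemOEiUnits p i u ∧
    x = Units.map (algebraMap ℚ_[p] (E p)).toMonoidHom t * y * u

end ArakawaSplit

open ArakawaSplit

@[simp]
lemma MulEquiv.val_prodUnits_symm {M N : Type*} [Monoid M] [Monoid N] (u : Mˣ × Nˣ) :
    ((MulEquiv.prodUnits.symm u : (M × N)ˣ) : M × N) = ((u.1 : M), (u.2 : N)) :=
  rfl

namespace ArakawaSplit

variable {p : ℕ} [Fact p.Prime]

variable (p) in
noncomputable def pUnit : ℚ_[p]ˣ :=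
  Units.mk0 (p : ℚ_[p]) (Nat.cast_ne_zero.mpr (Fact.out : p.Prime).ne_zero)

noncomputable def unitsCoe : ℤ_[p]ˣ →* ℚ_[p]ˣ :=
  Units.map (PadicInt.Coe.ringHom : ℤ_[p] →+* ℚ_[p]).toMonoidHom

@[simp]
lemma val_unitsCoe (a : ℤ_[p]ˣ) : ((unitsCoe a : ℚ_[p]ˣ) : ℚ_[p]) = ((a : ℤ_[p]) : ℚ_[p]) := rfl

lemma unitsCoe_injective : Function.Injective (unitsCoe (p := p)) :=
  Units.map_injective Subtype.val_injective

variable (p) in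
noncomputable def principalUnits (i : ℕ) : Subgroup ℤ_[p]ˣ :=
  (Units.map (PadicInt.toZModPow (p := p) i : ℤ_[p] →* ZMod (p ^ i))).ker

lemma inv_mul_mem_principalUnits_iff {i : ℕ} (a b : ℤ_[p]ˣ) :
    a⁻¹ * b ∈ principalUnits p i ↔ (p : ℤ_[p]) ^ i ∣ (a : ℤ_[p]) - b := by
  rw [principalUnits, MonoidHom.mem_ker, map_mul, map_inv, inv_mul_eq_one, Units.ext_iff,
    ← Ideal.mem_span_singleton, ← PadicInt.ker_toZModPow, RingHom.sub_mem_ker_iff]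
  rfl

lemma norm_zpow_mul_unitsCoe (k : ℤ) (b : ℤ_[p]ˣ) :
    ‖((pUnit p ^ k * unitsCoe b : ℚ_[p]ˣ) : ℚ_[p])‖ = (p : ℝ) ^ (-k) := by
  simp [pUnit]

lemma exists_eq_zpow_mul_unitsCoe (q : ℚ_[p]ˣ) :
    ∃ (m : ℤ) (b : ℤ_[p]ˣ), q = pUnit p ^ m * unitsCoe b := by
  have hp : (p : ℚ_[p]) ≠ 0 := (pUnit p).ne_zero
  have hnorm : ‖(q : ℚ_[p]) * (p : ℚ_[p]) ^ (-(q : ℚ_[p]).valuation)‖ = 1 := by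
    rw [norm_mul, Padic.norm_eq_zpow_neg_valuation q.ne_zero, Padic.norm_p_zpow, neg_neg,
      ← zpow_add₀ (by exact_mod_cast hp)]
    simp
  refine ⟨(q : ℚ_[p]).valuation, PadicInt.mkUnits hnorm, Units.ext ?_⟩
  simp only [pUnit, Units.val_mul, Units.val_zpow_eq_zpow_val, Units.val_mk0, val_unitsCoe,
    PadicInt.mkUnits_eq]
  rw [mul_left_comm, ← zpow_add₀ hp, add_neg_cancel, zpow_zero, mul_one]

lemma zpow_mul_unitsCoe_mem_map_iff {i : ℕ} (k : ℤ) (b : ℤ_[p]ˣ) :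
    pUnit p ^ k * unitsCoe b ∈ (principalUnits p i).map unitsCoe ↔
      k = 0 ∧ b ∈ principalUnits p i := by
  constructor
  · rintro ⟨w, hw, hwb⟩
    have hk : k = 0 := by
      have hnorm := norm_zpow_mul_unitsCoe k b
      rw [← hwb, val_unitsCoe, PadicInt.padic_norm_e_of_padicInt, PadicInt.norm_units] at hnorm
      have hp : (1 : ℝ) < p := by exact_mod_cast (Fact.out : p.Prime).one_lt
      simpa using zpow_right_injective₀ (by linarith) hp.ne' (hnorm.symm.trans (zpow_zero _).symm)
    subst hk
    rw [zpow_zero, one_mul] at hwb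
    exact ⟨rfl, unitsCoe_injective hwb ▸ hw⟩
  · rintro ⟨rfl, hb⟩
    simpa using Subgroup.mem_map_of_mem unitsCoe hb

lemma mk_zpow_mul_unitsCoe_eq_iff {i : ℕ} {m m' : ℤ} {a a' : ℤ_[p]ˣ} :
    (↑(pUnit p ^ m * unitsCoe a) : ℚ_[p]ˣ ⧸ (principalUnits p i).map unitsCoe) =
        ↑(pUnit p ^ m' * unitsCoe a') ↔ m = m' ∧ (p : ℤ_[p]) ^ i ∣ (a : ℤ_[p]) - a' := by
  have hquot : (pUnit p ^ m * unitsCoe a)⁻¹ * (pUnit p ^ m' * unitsCoe a') =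
      pUnit p ^ (m' - m) * unitsCoe (a⁻¹ * a') := by
    rw [zpow_sub, map_mul, map_inv]
    ext
    simp only [Units.val_mul, Units.val_inv_eq_inv_val, mul_inv]
    ring
  rw [QuotientGroup.eq, hquot, zpow_mul_unitsCoe_mem_map_iff, sub_eq_zero,
    inv_mul_mem_principalUnits_iff, eq_comm]

variable (p) in
noncomputable def ratio : (E p)ˣ →* ℚ_[p]ˣ :=
  Units.map (MonoidHom.fst ℚ_[p] ℚ_[p]) / Units.map (MonoidHom.snd ℚ_[p] ℚ_[p])

lemma val_ratio (x : (E p)ˣ) : (ratio p x : ℚ_[p]) = (x : E p).1 / (x : E p).2 := by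
  simp [ratio]

lemma ker_ratio : (ratio p).ker = (Units.map (algebraMap ℚ_[p] (E p)).toMonoidHom).range := by
  ext x
  have hx₂ : (x : E p).2 ≠ 0 := (Units.map (MonoidHom.snd ℚ_[p] ℚ_[p]) x).ne_zero
  rw [MonoidHom.mem_ker, MonoidHom.mem_range, Units.ext_iff, val_ratio, Units.val_one,
    div_eq_one_iff_eq hx₂]
  constructor
  · intro h
    exact ⟨Units.map (MonoidHom.snd ℚ_[p] ℚ_[p]) x, Units.ext (Prod.ext h.symm rfl)⟩
  · rintro ⟨t, rfl⟩
    rfl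

lemma exists_unitsCoe_eq {z : ℚ_[p]ˣ} {a a' : ℤ_[p]} (ha : (z : ℚ_[p]) = a)
    (ha' : ((z⁻¹ : ℚ_[p]ˣ) : ℚ_[p]) = a') : ∃ A : ℤ_[p]ˣ, unitsCoe A = z := by
  have hmul : a * a' = 1 := Subtype.val_injective <| by
    push_cast
    rw [← ha, ← ha']
    exact z.mul_inv
  exact ⟨Units.mkOfMulEqOne a a' hmul, Units.ext (by simp [ha])⟩

lemma ratio_mem_of_memOEiUnits {i : ℕ} {u : (E p)ˣ} (hu : MemOEiUnits p i u) :
    ratio p u ∈ (principalUnits p i).map unitsCoe := by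
  obtain ⟨⟨c, w₁, w₂, hc⟩, ⟨⟨a, ha⟩, ⟨b, hb⟩⟩, ⟨⟨a', ha'⟩, ⟨b', hb'⟩⟩⟩ := hu
  obtain ⟨A, hA⟩ := exists_unitsCoe_eq (z := Units.map (MonoidHom.fst ℚ_[p] ℚ_[p]) u) ha
    (by rw [← map_inv]; exact ha')
  obtain ⟨B, hB⟩ := exists_unitsCoe_eq (z := Units.map (MonoidHom.snd ℚ_[p] ℚ_[p]) u) hb
    (by rw [← map_inv]; exact hb')
  have hAc : (A : ℤ_[p]) = c + p ^ i * w₁ := Subtype.val_injective <| by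
    push_cast
    exact (congrArg Units.val hA).trans (congrArg Prod.fst hc)
  have hBc : (B : ℤ_[p]) = c + p ^ i * w₂ := Subtype.val_injective <| by
    push_cast
    exact (congrArg Units.val hB).trans (congrArg Prod.snd hc)
  refine ⟨B⁻¹ * A, (inv_mul_mem_principalUnits_iff B A).2 ⟨w₂ - w₁, ?_⟩, ?_⟩
  · rw [hAc, hBc]; ring
  · rw [map_mul, map_inv, hA, hB, inv_mul_eq_div]
    rfl

lemma exists_memOEiUnits_ratio_eq {i : ℕ} {w : ℤ_[p]ˣ} (hw : w ∈ principalUnits p i) :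
    ∃ u : (E p)ˣ, MemOEiUnits p i u ∧ ratio p u = unitsCoe w := by
  obtain ⟨d, hd⟩ := (inv_mul_mem_principalUnits_iff 1 w).1 (by rwa [inv_one, one_mul])
  rw [Units.val_one] at hd
  refine ⟨MulEquiv.prodUnits.symm (unitsCoe w, 1), ⟨⟨1, -d, 0, ?_⟩, ?_, ?_⟩, ?_⟩
  · have hwd : (w : ℤ_[p]) = 1 + p ^ i * -d := by rw [mul_neg, ← hd]; ring
    ext
    · simp [hwd]
    · simp
  · exact ⟨⟨w, rfl⟩, ⟨1, by simp⟩⟩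
  · exact ⟨⟨↑w⁻¹, rfl⟩, ⟨1, by simp⟩⟩
  · ext
    simp [val_ratio]

lemma inCoset_iff {i : ℕ} {y x : (E p)ˣ} :
    InCoset p i y x ↔
      (↑(ratio p y) : ℚ_[p]ˣ ⧸ (principalUnits p i).map unitsCoe) = ↑(ratio p x) := by
  rw [QuotientGroup.eq]
  constructor
  · rintro ⟨t, u, hu, rfl⟩
    have ht : ratio p (Units.map (algebraMap ℚ_[p] (E p)).toMonoidHom t) = 1 := by
      rw [← MonoidHom.mem_ker, ker_ratio]
      exact ⟨t, rfl⟩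
    rw [map_mul, map_mul, ht, one_mul, inv_mul_cancel_left]
    exact ratio_mem_of_memOEiUnits hu
  · rintro ⟨w, hw, hwx⟩
    obtain ⟨u, hu, hur⟩ := exists_memOEiUnits_ratio_eq hw
    have hker : (y * u)⁻¹ * x ∈ (ratio p).ker := by
      rw [MonoidHom.mem_ker, map_mul, map_inv, map_mul, hur, hwx]
      group
    rw [ker_ratio] at hker
    obtain ⟨t, ht⟩ := hker
    exact ⟨t, u, hu, by rw [ht, mul_assoc _ y u, mul_comm, mul_inv_cancel_left]⟩

lemma ratio_varpi1 : ratio p (varpi1 p) = pUnit p :=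
  Units.ext (by simp [val_ratio, varpi1, pUnit])

lemma one_add_ι_mul_θ (b : ℤ_[p]) : 1 + ι p b * θ p = (((1 + b : ℤ_[p]) : ℚ_[p]), 1) := by
  ext <;> simp [ι, θ]

lemma ratio_unitOf_one_add_ι_mul_θ {b : ℤ_[p]} (hb : IsUnit (1 + b)) :
    ratio p (unitOf p (1 + ι p b * θ p)) = unitsCoe hb.unit := by
  have hunit : IsUnit (1 + ι p b * θ p) := by
    rw [one_add_ι_mul_θ, Prod.isUnit_iff]
    exact ⟨hb.map PadicInt.Coe.ringHom, isUnit_one⟩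
  ext
  rw [val_ratio, unitOf, dif_pos hunit, IsUnit.unit_spec, one_add_ι_mul_θ]
  simp

end ArakawaSplit

theorem double_coset_split_general (p : ℕ) [Fact p.Prime] (i : ℕ) :
    (∀ (m : ℤ) (b b' : ℤ_[p]), IsUnit (1 + b) → IsUnit (1 + b') →
        (p : ℤ_[p]) ^ i ∣ (b - b') →
        ∀ x : (E p)ˣ,
          InCoset p i (varpi1 p ^ m * unitOf p (1 + ι p b * θ p)) x ↔
          InCoset p i (varpi1 p ^ m * unitOf p (1 + ι p b' * θ p)) x) ∧
    (∀ x : (E p)ˣ,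
      (∃ (m : ℤ) (b : ℤ_[p]), IsUnit (1 + b) ∧
        InCoset p i (varpi1 p ^ m * unitOf p (1 + ι p b * θ p)) x) ∧
      (∀ (m m' : ℤ) (b b' : ℤ_[p]), IsUnit (1 + b) → IsUnit (1 + b') →
        InCoset p i (varpi1 p ^ m * unitOf p (1 + ι p b * θ p)) x →
        InCoset p i (varpi1 p ^ m' * unitOf p (1 + ι p b' * θ p)) x →
        m = m' ∧ (p : ℤ_[p]) ^ i ∣ (b - b'))) := by
  have hcoset (m : ℤ) {b : ℤ_[p]} (hb : IsUnit (1 + b)) (x : (E p)ˣ) :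
      InCoset p i (varpi1 p ^ m * unitOf p (1 + ι p b * θ p)) x ↔
        (↑(pUnit p ^ m * unitsCoe hb.unit) : ℚ_[p]ˣ ⧸ (principalUnits p i).map unitsCoe) =
          ↑(ratio p x) := by
    rw [inCoset_iff, map_mul, map_zpow, ratio_varpi1, ratio_unitOf_one_add_ι_mul_θ hb]
  refine ⟨fun m b b' hb hb' hbb' x => ?_, fun x => ⟨?_, fun m m' b b' hb hb' hx hx' => ?_⟩⟩
  · have hcongr : (p : ℤ_[p]) ^ i ∣ (hb.unit : ℤ_[p]) - hb'.unit := by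
      rwa [IsUnit.unit_spec, IsUnit.unit_spec, add_sub_add_left_eq_sub]
    rw [hcoset m hb, hcoset m hb', mk_zpow_mul_unitsCoe_eq_iff.2 ⟨rfl, hcongr⟩]
  · obtain ⟨m, a, ha⟩ := exists_eq_zpow_mul_unitsCoe (ratio p x)
    have hb : IsUnit (1 + ((a : ℤ_[p]) - 1)) := by simp
    refine ⟨m, a - 1, hb, (hcoset m hb x).2 ?_⟩
    rw [ha, show hb.unit = a from Units.ext (by simp)]
  · rw [hcoset m hb] at hx
    rw [hcoset m' hb'] at hx'
    simpa using mk_zpow_mul_unitsCoe_eq_iff.1 (hx.trans hx'.symm)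

/-- **Double coset decomposition `ℚ_p^× \ E^× / 𝒪_{E,i}^×`** (Section 3.2(1), split
prime case). For `i ≥ 1` and `ϖ₁ = (p,1)`, every `x ∈ E^×` lies in the double coset
`ℚ_p^× ϖ₁^m (1+bθ) 𝒪_{E,i}^×` for exactly one pair `(m, b̄)` with `m ∈ ℤ` and
`b̄ ∈ ℤ_p/p^i ℤ_p` represented by `b` with `1+b ∈ ℤ_p^×`; the double coset of
`ϖ₁^m (1+bθ)` depends only on `b̄`. -/
theorem double_coset_split (p : ℕ) [Fact p.Prime] (i : ℕ) (hi : 1 ≤ i) :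
    (∀ (m : ℤ) (b b' : ℤ_[p]), IsUnit (1 + b) → IsUnit (1 + b') →
        (p : ℤ_[p]) ^ i ∣ (b - b') →
        ∀ x : (E p)ˣ,
          InCoset p i (varpi1 p ^ m * unitOf p (1 + ι p b * θ p)) x ↔
          InCoset p i (varpi1 p ^ m * unitOf p (1 + ι p b' * θ p)) x) ∧
    (∀ x : (E p)ˣ,
      (∃ (m : ℤ) (b : ℤ_[p]), IsUnit (1 + b) ∧
        InCoset p i (varpi1 p ^ m * unitOf p (1 + ι p b * θ p)) x) ∧
      (∀ (m m' : ℤ) (b b' : ℤ_[p]), IsUnit (1 + b) → IsUnit (1 + b') →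
        InCoset p i (varpi1 p ^ m * unitOf p (1 + ι p b * θ p)) x →
        InCoset p i (varpi1 p ^ m' * unitOf p (1 + ι p b' * θ p)) x →
        m = m' ∧ (p : ℤ_[p]) ^ i ∣ (b - b'))) :=
  double_coset_split_general p i
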